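/- For all t > 0, t − log t − 1 ≥ (t−1)²/(2 max(t,1)). -/

import Mathlib

/-!
For `t ≤ 1` the bound is the second partial sum of the nonnegative series
`-log (1 - x) = ∑ xⁿ⁺¹ / (n + 1)` at `x = 1 - t`. For `t ≥ 1` it is equivalent to
`log t ≤ (t - t⁻¹) / 2 = sinh (log t)`, an instance of `u ≤ sinh u` for `u ≥ 0`.
-/

open Real Finset

theorem Real.add_sq_div_two_le_neg_log_one_sub {x : ℝ} (hx₀ : 0 ≤ x) (hx₁ : x < 1) :
    x + x ^ 2 / 2 ≤ -log (1 - x) := by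
  have hsum := hasSum_pow_div_log_of_abs_lt_one (abs_lt.2 ⟨by linarith, hx₁⟩)
  have hpartial := sum_le_hasSum (range 2) (fun n _ => by positivity) hsum
  norm_num [sum_range_succ] at hpartial
  linarith

theorem Real.log_le_sub_inv_div_two {t : ℝ} (ht : 1 ≤ t) : log t ≤ (t - t⁻¹) / 2 := by
  rw [← sinh_log (by positivity)]
  exact self_le_sinh_iff.2 (log_nonneg ht)

/-- Quadratic lower bound for the Gaussian KL term:
`t − log t − 1 ≥ (t−1)²/(2 max(t,1))` for all `t > 0`. -/
theorem t_sub_log_quadratic_lower_bound (t : ℝ) (ht : 0 < t) :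
    (t - 1) ^ 2 / (2 * max t 1) ≤ t - Real.log t - 1 := by
  rcases le_total t 1 with hle | hge
  · have hlog := add_sq_div_two_le_neg_log_one_sub (sub_nonneg.2 hle) (sub_lt_self 1 ht)
    rw [sub_sub_cancel] at hlog
    calc (t - 1) ^ 2 / (2 * max t 1) = (1 - t) ^ 2 / 2 := by rw [max_eq_right hle]; ring
      _ ≤ t - log t - 1 := by linarith
  · have hlog := log_le_sub_inv_div_two hge
    calc (t - 1) ^ 2 / (2 * max t 1) = t - 1 - (t - t⁻¹) / 2 := by
          rw [max_eq_left hge]; field_simp; ring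
      _ ≤ t - log t - 1 := by linarith
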